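/- For every n ≥ 1, the indicated domination number of the path P_n equals ⌈n/2⌉. -/

import Mathlib

/-!
Only the set `U` of undominated vertices matters, and selecting `v` removes
`N[v] = {v - 1, v, v + 1}` from it.

Lower bound: count the elements of `U` at an even offset from the start of their run of
consecutive elements; initially this is `⌈n/2⌉`. Whatever `u` Dominator indicates, Staller
answers with whichever of `u`, `u - 1` lies at an even offset. This removes exactly one counted
element and leaves the offset parity of every other element unchanged.

Upper bound: Dominator keeps `U` of the form `[a, n)` or `{a} ∪ [a + 4, n)`. On `[a, n)` he
indicates `a + 1`; the answers `a`, `a + 1` shorten the interval by at least two, and the answer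
`a + 2` leaves the isolated vertex `a`, which he clears with one more move: two moves for four
vertices.
-/

open Finset

open scoped Classical

noncomputable section

namespace IndicatedDom

variable {V : Type*} [Fintype V]

/-- Closed neighborhood `N[v]` as a `Finset`. -/
def cnbhd (G : SimpleGraph V) (v : V) : Finset V :=
  insert v (G.neighborFinset v)

/-- `D` is a dominating set of `G`. -/
def Dominates (G : SimpleGraph V) (D : Finset V) : Prop :=
  ∀ u, ∃ v ∈ D, u ∈ cnbhd G v

/-- The set of vertices not dominated by `D`. -/
def undom (G : SimpleGraph V) (D : Finset V) : Finset V :=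
  univ.filter fun u => ∀ v ∈ D, u ∉ cnbhd G v

/-- Game value of the indicated domination game with a fuel parameter:
given the set `D` of vertices selected so far, Dominator indicates an
undominated vertex `u` (minimizing), Staller selects a vertex of `N[u]`
(maximizing); each selection counts one. -/
def giAux (G : SimpleGraph V) : ℕ → Finset V → ℕ
  | 0, _ => 0
  | (fuel+1), D =>
    if h : (undom G D).Nonempty then
      (undom G D).inf' h fun u =>
        (cnbhd G u).sup' ⟨u, Finset.mem_insert_self u _⟩ fun v => giAux G fuel (insert v D) + 1
    else 0

/-- The indicated domination number `γᵢ(G)`. -/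
def indicatedDomNum (G : SimpleGraph V) : ℕ :=
  giAux G (Fintype.card V) ∅

/-- Game value of the standard domination game with a fuel parameter:
`dom = true` means it is Dominator's turn (minimizing); legal moves are
vertices dominating at least one new vertex. -/
def gameAux (G : SimpleGraph V) : ℕ → Bool → Finset V → ℕ
  | 0, _, _ => 0
  | (fuel+1), dom, D =>
    if h : (univ.filter fun v => ∃ u ∈ cnbhd G v, u ∈ undom G D).Nonempty then
      if dom then
        (univ.filter fun v => ∃ u ∈ cnbhd G v, u ∈ undom G D).inf' h
          fun v => gameAux G fuel false (insert v D) + 1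
      else
        (univ.filter fun v => ∃ u ∈ cnbhd G v, u ∈ undom G D).sup' h
          fun v => gameAux G fuel true (insert v D) + 1
    else 0

/-- The game domination number `γ_g(G)` (Dominator starts). -/
def gameDomNum (G : SimpleGraph V) : ℕ :=
  gameAux G (Fintype.card V) true ∅

/-- A minimal dominating set. -/
def IsMinimalDominating (G : SimpleGraph V) (D : Finset V) : Prop :=
  Dominates G D ∧ ∀ D' ⊂ D, ¬ Dominates G D'

/-- The upper domination number `Γ(G)`. -/
def upperDomNum (G : SimpleGraph V) : ℕ :=
  sSup {k | ∃ D : Finset V, IsMinimalDominating G D ∧ D.card = k}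

/-- A dominating (Grundy) sequence: every vertex dominates something new,
and the whole sequence dominates `G`. -/
def IsDominatingSeq (G : SimpleGraph V) (l : List V) : Prop :=
  (∀ i : Fin l.length, ∃ u, u ∈ cnbhd G (l.get i) ∧
      ∀ j : Fin l.length, (j : ℕ) < (i : ℕ) → u ∉ cnbhd G (l.get j)) ∧
    Dominates G l.toFinset

/-- The Grundy domination number `γ_gr(G)`. -/
def grundyDomNum (G : SimpleGraph V) : ℕ :=
  sSup {k | ∃ l : List V, IsDominatingSeq G l ∧ l.length = k}

/-- The independence number `α(G)`. -/
def indepNum (G : SimpleGraph V) : ℕ :=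
  sSup {k | ∃ S : Finset V, (∀ x ∈ S, ∀ y ∈ S, ¬ G.Adj x y) ∧ S.card = k}

/-- `S` is irredundant: every `x ∈ S` has a private neighbor w.r.t. `S`. -/
def Irredundant (G : SimpleGraph V) (S : Finset V) : Prop :=
  ∀ x ∈ S, ∃ w, (∃ v ∈ S, w ∈ cnbhd G v) ∧ ¬ ∃ v ∈ S.erase x, w ∈ cnbhd G v

/-- The upper irredundance number `IR(G)`. -/
def upperIrredNum (G : SimpleGraph V) : ℕ :=
  sSup {k | ∃ S : Finset V, Irredundant G S ∧ (∀ T, S ⊂ T → ¬ Irredundant G T) ∧ S.card = k}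

/-- The star `K_{1,n}` with center `0`. -/
def starGraph (n : ℕ) : SimpleGraph (Fin (n+1)) where
  Adj a b := a ≠ b ∧ (a = 0 ∨ b = 0)
  symm := by constructor; intro a b h; exact ⟨h.1.symm, h.2.symm⟩
  loopless := by constructor; intro a h; exact h.1 rfl

/-- Two copies of `K_n` with a matching joining corresponding vertices of
index `≥ 1` (i.e. `K_n □ K₂` minus the matching edge at index `0`). -/
def Hgraph (n : ℕ) : SimpleGraph (Fin n × Bool) where
  Adj a b := (a.2 = b.2 ∧ a.1 ≠ b.1) ∨ (a.2 ≠ b.2 ∧ a.1 = b.1 ∧ (a.1 : ℕ) ≠ 0)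
  symm := by
    constructor
    rintro ⟨i, s⟩ ⟨j, t⟩ (⟨h1, h2⟩ | ⟨h1, h2, h3⟩)
    · exact Or.inl ⟨h1.symm, h2.symm⟩
    · exact Or.inr ⟨h1.symm, h2.symm, h2 ▸ h3⟩
  loopless := by constructor; rintro ⟨i, s⟩ (⟨_, h⟩ | ⟨h, _⟩) <;> exact h rfl

/-- The `k`-th power of the path on `n` vertices: `i ~ j` iff `1 ≤ |i-j| ≤ k`. -/
def pathPow (n k : ℕ) : SimpleGraph (Fin n) where
  Adj i j := i ≠ j ∧ (i : ℕ) ≤ (j : ℕ) + k ∧ (j : ℕ) ≤ (i : ℕ) + k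
  symm := by constructor; intro i j h; exact ⟨h.1.symm, h.2.2, h.2.1⟩
  loopless := by constructor; intro i h; exact h.1 rfl

/-- The cycle on `m` vertices (for `m ≥ 3`), modeled on `ZMod m`. -/
def cyc (m : ℕ) : SimpleGraph (ZMod m) where
  Adj i j := i ≠ j ∧ (i + 1 = j ∨ j + 1 = i)
  symm := by constructor; intro i j h; exact ⟨h.1.symm, h.2.symm⟩
  loopless := by constructor; intro i h; exact h.1 rfl

/-- The graph `D₁`: a `9`-cycle `x₁x₂…x₉` plus chords `x₁x₃, x₄x₆, x₇x₉`
(vertex `xᵢ` is represented by `i - 1 : ZMod 9`). -/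
def DGraph : SimpleGraph (ZMod 9) where
  Adj i j := i ≠ j ∧ (i + 1 = j ∨ j + 1 = i ∨
    (i = 0 ∧ j = 2) ∨ (i = 2 ∧ j = 0) ∨ (i = 3 ∧ j = 5) ∨ (i = 5 ∧ j = 3) ∨
    (i = 6 ∧ j = 8) ∨ (i = 8 ∧ j = 6))
  symm := by constructor; intro i j h; refine ⟨h.1.symm, ?_⟩; tauto
  loopless := by constructor; intro i h; exact h.1 rfl


section Game

variable {V : Type*} [Fintype V] {G : SimpleGraph V}

lemma mem_undom {D : Finset V} {u : V} : u ∈ undom G D ↔ ∀ w ∈ D, u ∉ cnbhd G w := by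
  simp [undom]

lemma undom_insert [DecidableEq V] (v : V) (D : Finset V) :
    undom G (insert v D) = undom G D \ cnbhd G v := by
  ext u
  simp only [mem_undom, mem_sdiff, forall_mem_insert]
  tauto

lemma giAux_eq_zero_of_undom_eq_empty {fuel : ℕ} {D : Finset V} (h : undom G D = ∅) :
    giAux G fuel D = 0 := by
  cases fuel <;> simp [giAux, h]

-- `giAux` inserts with the classical `DecidableEq` instance; these two lemmas accept any instance.
lemma giAux_succ_le [DecidableEq V] {fuel k : ℕ} {D : Finset V} {u : V} (hu : u ∈ undom G D)
    (h : ∀ v ∈ cnbhd G u, giAux G fuel (insert v D) + 1 ≤ k) : giAux G (fuel + 1) D ≤ k := by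
  rw [giAux, dif_pos ⟨u, hu⟩]
  refine (inf'_le _ hu).trans (sup'_le _ _ fun v hv => ?_)
  obtain rfl := Subsingleton.elim ‹DecidableEq V› fun a b => Classical.propDecidable (a = b)
  exact h v hv

lemma le_giAux_succ [DecidableEq V] {fuel k : ℕ} {D : Finset V} (hD : (undom G D).Nonempty)
    (h : ∀ u ∈ undom G D, ∃ v ∈ cnbhd G u, k ≤ giAux G fuel (insert v D) + 1) :
    k ≤ giAux G (fuel + 1) D := by
  rw [giAux, dif_pos hD]
  refine le_inf' _ _ fun u hu => ?_
  obtain ⟨v, hv, hk⟩ := h u hu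
  obtain rfl := Subsingleton.elim ‹DecidableEq V› fun a b => Classical.propDecidable (a = b)
  exact hk.trans (le_sup' (fun v => giAux G fuel (insert v D) + 1) hv)

end Game

def leftRun (U : Finset ℕ) : ℕ → ℕ
  | 0 => 0
  | w + 1 => if w ∈ U then leftRun U w + 1 else 0

/-- Summed over the maximal runs of consecutive elements of `U`, this is `∑ ⌈length / 2⌉`. -/
def evenOffsetCount (U : Finset ℕ) : ℕ :=
  (U.filter fun w => Even (leftRun U w)).card

section Runs

variable {U : Finset ℕ}

lemma leftRun_congr {U' : Finset ℕ} {w : ℕ} (h : ∀ x < w, x ∈ U ↔ x ∈ U') : leftRun U w = leftRun U' w := by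
  induction w with
  | zero => rfl
  | succ w ih =>
    simp only [leftRun, h w w.lt_succ_self, ih fun x hx => h x (by omega)]

lemma leftRun_range {n w : ℕ} (h : w ≤ n) : leftRun (range n) w = w := by
  induction w with
  | zero => rfl
  | succ w ih => simp [leftRun, ih (by omega), show w < n by omega]

lemma exists_even_leftRun {u : ℕ} (hu : u ∈ U) :
    ∃ v ∈ U, Even (leftRun U v) ∧ v ≤ u ∧ u ≤ v + 1 := by
  by_cases he : Even (leftRun U u)
  · exact ⟨u, hu, he, le_rfl, by omega⟩
  · obtain _ | w := u
    · exact absurd Even.zero he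
    · by_cases hw : w ∈ U
      · refine ⟨w, hw, ?_, by omega, le_rfl⟩
        simpa [leftRun, hw, Nat.even_add_one] using he
      · simp [leftRun, hw] at he

/-- The run through `v` now starts at `v + 2` instead of an even distance below `v`. -/
lemma even_leftRun_sdiff_iff {v : ℕ} (hv : v ∈ U) (he : Even (leftRun U v)) (k : ℕ) :
    Even (leftRun (U \ Icc (v - 1) (v + 1)) (v + 2 + k)) ↔ Even (leftRun U (v + 2 + k)) := by
  induction k with
  | zero =>
    have hv1 : v + 1 ∉ U \ Icc (v - 1) (v + 1) := fun h =>
      (mem_sdiff.1 h).2 (mem_Icc.2 ⟨by omega, le_rfl⟩)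
    show Even (leftRun _ (v + 1 + 1)) ↔ Even (leftRun U (v + 1 + 1))
    simp only [leftRun, if_neg hv1, if_pos hv, Even.zero, true_iff]
    split_ifs <;> simp [he]
  | succ k ih =>
    have hmem : v + 2 + k ∈ U \ Icc (v - 1) (v + 1) ↔ v + 2 + k ∈ U := by
      rw [mem_sdiff, and_iff_left (by simp only [mem_Icc]; omega)]
    rw [← add_assoc, leftRun, leftRun]
    by_cases h : v + 2 + k ∈ U
    · simp only [if_pos h, if_pos (hmem.2 h), Nat.even_add_one, ih]
    · simp only [if_neg h, if_neg (mt hmem.1 h)]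

lemma evenOffsetCount_sdiff {v : ℕ} (hv : v ∈ U) (he : Even (leftRun U v)) :
    evenOffsetCount (U \ Icc (v - 1) (v + 1)) + 1 = evenOffsetCount U := by
  set U' := U \ Icc (v - 1) (v + 1)
  have mem_U' : ∀ x, x + 2 ≤ v ∨ v + 2 ≤ x → (x ∈ U' ↔ x ∈ U) := fun x hx => by
    rw [mem_sdiff, and_iff_left (by simp only [mem_Icc]; omega)]
  have key : U.filter (fun w => Even (leftRun U w)) =
      insert v (U'.filter fun w => Even (leftRun U' w)) := by
    ext w
    simp only [mem_filter, mem_insert]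
    by_cases hw : w + 2 ≤ v
    · rw [mem_U' w (.inl hw), leftRun_congr fun x hx => mem_U' x (.inl (by omega))]
      simp [show w ≠ v by omega]
    by_cases hw' : v + 2 ≤ w
    · obtain ⟨k, rfl⟩ := Nat.exists_eq_add_of_le hw'
      rw [mem_U' _ (.inr hw'), even_leftRun_sdiff_iff hv he]
      simp [show v + 2 + k ≠ v by omega]
    have hU' : w ∉ U' := by simp [U', mem_sdiff, mem_Icc]; omega
    simp only [hU', false_and, or_false]
    rcases (show w = v ∨ w + 1 = v ∨ w = v + 1 by omega) with rfl | rfl | rfl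
    · simp [hv, he]
    · refine ⟨fun ⟨hw, hev⟩ => ?_, fun h => by omega⟩
      rw [leftRun, if_pos hw, Nat.even_add_one] at he
      exact absurd hev he
    · simp [leftRun, hv, he]
  rw [evenOffsetCount, evenOffsetCount, key, card_insert_of_notMem (by simp [U'])]

lemma evenOffsetCount_range (n : ℕ) : evenOffsetCount (range n) = (n + 1) / 2 := by
  rw [evenOffsetCount, filter_congr fun w hw => by rw [leftRun_range (mem_range.1 hw).le]]
  induction n with
  | zero => rfl
  | succ n ih =>
    rw [range_add_one, filter_insert]
    split_ifs with h
    · rw [card_insert_of_notMem (by simp), ih]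
      rw [Nat.even_iff] at h
      omega
    · rw [ih]
      rw [Nat.even_iff] at h
      omega

end Runs

section Path

variable {n : ℕ}

lemma mem_cnbhd_pathPow_one {v x : Fin n} :
    x ∈ cnbhd (pathPow n 1) v ↔ (v : ℕ) ≤ x + 1 ∧ (x : ℕ) ≤ v + 1 := by
  simp only [cnbhd, mem_insert, SimpleGraph.mem_neighborFinset]
  show x = v ∨ (v ≠ x ∧ (v : ℕ) ≤ x + 1 ∧ (x : ℕ) ≤ v + 1) ↔ _
  rw [Fin.ext_iff, ne_eq, Fin.ext_iff]
  omega

def undomVals (n : ℕ) (D : Finset (Fin n)) : Finset ℕ :=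
  (undom (pathPow n 1) D).map Fin.valEmbedding

lemma coe_mem_undomVals {D : Finset (Fin n)} {u : Fin n} :
    (u : ℕ) ∈ undomVals n D ↔ u ∈ undom (pathPow n 1) D :=
  mem_map' Fin.valEmbedding

lemma undomVals_eq_empty {D : Finset (Fin n)} :
    undomVals n D = ∅ ↔ undom (pathPow n 1) D = ∅ :=
  map_eq_empty

lemma undomVals_empty : undomVals n ∅ = range n := by
  ext x
  simp only [undomVals, mem_map, mem_undom, Fin.valEmbedding_apply, mem_range]
  exact ⟨fun ⟨u, _, hu⟩ => hu ▸ u.isLt, fun hx => ⟨⟨x, hx⟩, by simp, rfl⟩⟩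

lemma undomVals_insert [DecidableEq (Fin n)] (v : Fin n) (D : Finset (Fin n)) :
    undomVals n (insert v D) = undomVals n D \ Icc (v - 1) (v + 1) := by
  ext x
  simp only [undomVals, undom_insert, mem_map, mem_sdiff, mem_cnbhd_pathPow_one,
    Fin.valEmbedding_apply, mem_Icc]
  constructor
  · rintro ⟨u, ⟨hu, hv⟩, rfl⟩
    exact ⟨⟨u, hu, rfl⟩, by omega⟩
  · rintro ⟨⟨u, hu, rfl⟩, hv⟩
    exact ⟨u, ⟨hu, by omega⟩, rfl⟩

theorem evenOffsetCount_le_giAux (fuel : ℕ) (D : Finset (Fin n))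
    (hfuel : evenOffsetCount (undomVals n D) ≤ fuel) :
    evenOffsetCount (undomVals n D) ≤ giAux (pathPow n 1) fuel D := by
  induction fuel generalizing D with
  | zero => omega
  | succ fuel ih =>
    rcases (undom (pathPow n 1) D).eq_empty_or_nonempty with hD | hD
    · simp [undomVals_eq_empty.2 hD, evenOffsetCount]
    refine le_giAux_succ hD fun u hu => ?_
    obtain ⟨_, hv, he, hvu, huv⟩ := exists_even_leftRun (coe_mem_undomVals.2 hu)
    obtain ⟨v, -, rfl⟩ := mem_map.1 hv
    simp only [Fin.valEmbedding_apply] at hv he hvu huv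
    refine ⟨v, mem_cnbhd_pathPow_one.2 ⟨by omega, by omega⟩, ?_⟩
    have hcount := evenOffsetCount_sdiff hv he
    rw [← hcount, ← undomVals_insert]
    exact Nat.add_le_add_right (ih _ (by rw [undomVals_insert]; omega)) 1

lemma giAux_le_of_undomVals_eq_insert_Ico {fuel : ℕ}
    (hI : ∀ (D : Finset (Fin n)) (a : ℕ), undomVals n D = Ico a n →
      giAux (pathPow n 1) fuel D ≤ (n - a + 1) / 2)
    {D : Finset (Fin n)} {c : ℕ} (hc : c < n) (hD : undomVals n D = insert c (Ico (c + 4) n)) :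
    giAux (pathPow n 1) (fuel + 1) D ≤ (n - c - 3) / 2 + 1 := by
  have hu : (⟨c, hc⟩ : Fin n) ∈ undom (pathPow n 1) D := coe_mem_undomVals.1 (by simp [hD])
  refine giAux_succ_le hu fun v hv => ?_
  rw [mem_cnbhd_pathPow_one, Fin.val_mk] at hv
  have hD' : undomVals n (insert v D) = Ico (c + 4) n := by
    rw [undomVals_insert, hD]
    ext x
    simp only [mem_sdiff, mem_insert, mem_Ico, mem_Icc]
    omega
  have := hI _ _ hD'
  omega

theorem giAux_le_of_undomVals_eq_Ico (fuel : ℕ) {D : Finset (Fin n)} {a : ℕ}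
    (hD : undomVals n D = Ico a n) : giAux (pathPow n 1) fuel D ≤ (n - a + 1) / 2 := by
  induction fuel using Nat.strong_induction_on generalizing D a with
  | _ fuel ih =>
  obtain _ | fuel := fuel
  · exact Nat.zero_le _
  rcases le_or_gt n a with han | han
  · rw [giAux_eq_zero_of_undom_eq_empty (undomVals_eq_empty.1 (by simp [hD, han]))]
    exact Nat.zero_le _
  have hu : (⟨min (a + 1) (n - 1), by omega⟩ : Fin n) ∈ undom (pathPow n 1) D :=
    coe_mem_undomVals.1 (by simp only [hD, mem_Ico]; omega)
  refine giAux_succ_le hu fun v hv => ?_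
  rw [mem_cnbhd_pathPow_one, Fin.val_mk] at hv
  by_cases hva : (v : ℕ) ≤ a + 1
  · have hD' : undomVals n (insert v D) = Ico ((v : ℕ) + 2) n := by
      rw [undomVals_insert, hD]
      ext x
      simp only [mem_sdiff, mem_Ico, mem_Icc]
      omega
    have := ih fuel (by omega) hD'
    omega
  · have hD' : undomVals n (insert v D) = insert a (Ico (a + 4) n) := by
      rw [undomVals_insert, hD]
      ext x
      simp only [mem_sdiff, mem_insert, mem_Ico, mem_Icc]
      omega
    rcases fuel with _ | fuel
    · rw [giAux]
      omega
    have := giAux_le_of_undomVals_eq_insert_Ico (fun D a h => ih fuel (by omega) h) han hD'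
    omega

end Path

theorem stmt9_general (n : ℕ) :
    indicatedDomNum (pathPow n 1) = (n + 1) / 2 := by
  have hstart : undomVals n ∅ = range n := undomVals_empty
  rw [indicatedDomNum]
  apply le_antisymm
  · simpa using giAux_le_of_undomVals_eq_Ico (Fintype.card (Fin n)) (hstart.trans (range_eq_Ico n))
  · have hfuel : evenOffsetCount (undomVals n ∅) ≤ Fintype.card (Fin n) := by
      rw [hstart, evenOffsetCount_range, Fintype.card_fin]
      omega
    simpa [hstart, evenOffsetCount_range] using evenOffsetCount_le_giAux _ ∅ hfuel

/-- `γᵢ(P_n) = ⌈n/2⌉` for every `n ≥ 1`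
(the path `P_n` is the first power of the path). -/
theorem stmt9 (n : ℕ) (hn : 1 ≤ n) :
    indicatedDomNum (pathPow n 1) = (n + 1) / 2 :=
  stmt9_general n

end IndicatedDom
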